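/- Let H ≤ GL(d,ℝ) be a closed subgroup possessing an open dual orbit 𝒪₁ = {hᵀξ₀ : h ∈ H} for some ξ₀ ∈ ℝ^d, and assume the complement 𝒪₁^c contains 0 and is closed under multiplication by positive scalars. Let g ∈ GL(d,ℝ) and H_g = g⁻¹Hg. Then 𝒪₂ := gᵀ𝒪₁ equals the dual orbit {hᵀ(gᵀξ₀) : h ∈ H_g} of H_g and is open, and there exist constants 0 < c₁ ≤ c₂ such that for all ξ ∈ 𝒪₁: c₁·A_{𝒪₁}(ξ) ≤ A_{𝒪₂}(gᵀξ) ≤ c₂·A_{𝒪₁}(ξ). -/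

import Mathlib

open MeasureTheory Matrix Metric

noncomputable section

variable {n : Type*} [Fintype n] [DecidableEq n]

/-- The dual action `ξ ↦ hᵀ ξ` of a matrix on Euclidean space. -/
def dualAct (h : Matrix n n ℝ) (ξ : EuclideanSpace ℝ n) : EuclideanSpace ℝ n :=
  (EuclideanSpace.equiv n ℝ).symm (h.transpose.mulVec (EuclideanSpace.equiv n ℝ ξ))

/-- The envelope function `A_S` of a set `S` (with respect to Euclidean norm and distance). -/
def env (S : Set (EuclideanSpace ℝ n)) (ξ : EuclideanSpace ℝ n) : ℝ :=
  min (infDist ξ S / (1 + Real.sqrt (‖ξ‖ ^ 2 - infDist ξ S ^ 2))) (1 / (1 + ‖ξ‖))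

end

/-!
A linear change of variables `T` moves distances to `S` and norms by at most the factors
`‖T‖` and `‖T⁻¹‖`. The envelope `A_S(ξ)` itself is not directly compatible with this, because of
the term `√(|ξ|² − dist(ξ,S)²)`, but it is comparable, up to the factor `3`, to the simpler
quantity `min(dist(ξ,S), 1) / (1 + |ξ|)`, which transforms with the factor
`max(‖T‖,1) · max(‖T⁻¹‖,1)`. Applying this to `T = gᵀ` and to its inverse gives the two
envelope bounds; the orbit statement is the identity `(g⁻¹hg)ᵀ gᵀ = gᵀ hᵀ`.
-/

theorem infDist_image_le_of_lipschitzWith {α β : Type*} [PseudoMetricSpace α]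
    [PseudoMetricSpace β] {f : α → β} {K : NNReal} (hf : LipschitzWith K f) (x : α)
    (s : Set α) : infDist (f x) (f '' s) ≤ K * infDist x s := by
  rcases s.eq_empty_or_nonempty with rfl | hs
  · simp
  have : Nonempty s := hs.to_subtype
  rw [infDist_eq_iInf (s := s), Real.mul_iInf_of_nonneg K.coe_nonneg]
  exact le_ciInf fun y =>
    (infDist_le_dist_of_mem (Set.mem_image_of_mem f y.2)).trans (hf.dist_le_mul x y)

section EnvApprox

variable {E F : Type*} [NormedAddCommGroup E] [NormedSpace ℝ E]
  [NormedAddCommGroup F] [NormedSpace ℝ F]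

noncomputable def envApprox (S : Set E) (ξ : E) : ℝ :=
  min (infDist ξ S) 1 / (1 + ‖ξ‖)

theorem envApprox_image_le (T : E ≃L[ℝ] F) (S : Set E) (ξ : E) :
    envApprox (T '' S) (T ξ) ≤
      max ‖(T : E →L[ℝ] F)‖ 1 * max ‖(T.symm : F →L[ℝ] E)‖ 1 * envApprox S ξ := by
  set b := max ‖(T : E →L[ℝ] F)‖ 1
  set m := max ‖(T.symm : F →L[ℝ] E)‖ 1
  have hb : ‖(T : E →L[ℝ] F)‖ ≤ b := le_max_left _ _
  have hb1 : 1 ≤ b := le_max_right _ _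
  have hm : ‖(T.symm : F →L[ℝ] E)‖ ≤ m := le_max_left _ _
  have hm1 : 1 ≤ m := le_max_right _ _
  have hD : infDist (T ξ) (T '' S) ≤ b * infDist ξ S :=
    (infDist_image_le_of_lipschitzWith (T : E →L[ℝ] F).lipschitz ξ S).trans
      (mul_le_mul_of_nonneg_right hb infDist_nonneg)
  have hmin : min (infDist (T ξ) (T '' S)) 1 ≤ b * min (infDist ξ S) 1 := by
    rcases le_total (infDist ξ S) 1 with h | h
    · rw [min_eq_left h]; exact (min_le_left _ _).trans hD
    · rw [min_eq_right h, mul_one]; exact (min_le_right _ _).trans hb1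
  have hnorm : ‖ξ‖ ≤ m * ‖T ξ‖ := by
    calc ‖ξ‖ = ‖(T.symm : F →L[ℝ] E) (T ξ)‖ := by simp
      _ ≤ ‖(T.symm : F →L[ℝ] E)‖ * ‖T ξ‖ := ContinuousLinearMap.le_opNorm _ _
      _ ≤ m * ‖T ξ‖ := mul_le_mul_of_nonneg_right hm (norm_nonneg _)
  have hweight : (1 + ‖ξ‖) / m ≤ 1 + ‖T ξ‖ := by
    rw [div_le_iff₀ (by positivity)]
    linarith
  calc envApprox (T '' S) (T ξ) ≤ b * min (infDist ξ S) 1 / ((1 + ‖ξ‖) / m) :=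
        div_le_div₀ (mul_nonneg (by positivity) (le_min infDist_nonneg zero_le_one)) hmin
          (by positivity) hweight
    _ = b * m * envApprox S ξ := by
        unfold envApprox
        field_simp

theorem envApprox_le_image (T : E ≃L[ℝ] F) (S : Set E) (ξ : E) :
    envApprox S ξ ≤
      max ‖(T : E →L[ℝ] F)‖ 1 * max ‖(T.symm : F →L[ℝ] E)‖ 1 * envApprox (T '' S) (T ξ) := by
  have := envApprox_image_le T.symm (T '' S) (T ξ)
  rwa [T.symm_image_image, T.symm_apply_apply, T.symm_symm, mul_comm (max _ 1)] at this

end EnvApprox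

section Envelope

variable {n : Type*} [Fintype n]

theorem envApprox_le_env (S : Set (EuclideanSpace ℝ n)) (ξ : EuclideanSpace ℝ n) :
    envApprox S ξ ≤ env S ξ := by
  have hs : √(‖ξ‖ ^ 2 - infDist ξ S ^ 2) ≤ ‖ξ‖ :=
    (Real.sqrt_le_left (norm_nonneg ξ)).2 (by nlinarith [sq_nonneg (infDist ξ S)])
  refine le_min ?_ (div_le_div_of_nonneg_right (min_le_right _ _) (by positivity))
  exact div_le_div₀ infDist_nonneg (min_le_left _ _) (by positivity) (by linarith)

theorem env_le_three_mul_envApprox (S : Set (EuclideanSpace ℝ n)) (ξ : EuclideanSpace ℝ n) :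
    env S ξ ≤ 3 * envApprox S ξ := by
  set D := infDist ξ S
  set r := ‖ξ‖
  set s := √(r ^ 2 - D ^ 2)
  have hD : 0 ≤ D := infDist_nonneg
  have hr : 0 ≤ r := norm_nonneg ξ
  have hs : 0 ≤ s := Real.sqrt_nonneg _
  unfold env envApprox
  rcases le_total 1 D with hD1 | hD1
  · rw [min_eq_right hD1]
    have : 0 ≤ 1 / (1 + r) := by positivity
    linarith [min_le_right (D / (1 + s)) (1 / (1 + r))]
  · have hrs : r ≤ s + 2 := by
      by_cases hr2 : r ≤ 2
      · linarith
      · have : r - 2 ≤ s := (Real.le_sqrt (by linarith) (by nlinarith)).2 (by nlinarith)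
        linarith
    rw [min_eq_left hD1]
    refine (min_le_left _ _).trans ?_
    rw [mul_div_assoc', div_le_div_iff₀ (by positivity) (by positivity)]
    nlinarith

variable {m : Type*} [Fintype m]

theorem env_image_comparable
    (T : EuclideanSpace ℝ n ≃L[ℝ] EuclideanSpace ℝ m) (S : Set (EuclideanSpace ℝ n)) :
    ∃ c₁ c₂ : ℝ, 0 < c₁ ∧ c₁ ≤ c₂ ∧ ∀ ξ,
      c₁ * env S ξ ≤ env (T '' S) (T ξ) ∧ env (T '' S) (T ξ) ≤ c₂ * env S ξ := by
  set K := max ‖(T : EuclideanSpace ℝ n →L[ℝ] EuclideanSpace ℝ m)‖ 1 *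
    max ‖(T.symm : EuclideanSpace ℝ m →L[ℝ] EuclideanSpace ℝ n)‖ 1
  have hK : 1 ≤ K := one_le_mul_of_one_le_of_one_le (le_max_right _ _) (le_max_right _ _)
  refine ⟨(3 * K)⁻¹, 3 * K, by positivity, ?_, fun ξ => ⟨?_, ?_⟩⟩
  · exact (inv_le_one_of_one_le₀ (by linarith)).trans (by linarith)
  · rw [inv_mul_le_iff₀ (by positivity)]
    calc env S ξ ≤ 3 * envApprox S ξ := env_le_three_mul_envApprox S ξ
      _ ≤ 3 * (K * envApprox (T '' S) (T ξ)) := by gcongr; exact envApprox_le_image T S ξ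
      _ ≤ 3 * K * env (T '' S) (T ξ) := by
        rw [← mul_assoc]; gcongr; exact envApprox_le_env _ _
  · calc env (T '' S) (T ξ) ≤ 3 * envApprox (T '' S) (T ξ) := env_le_three_mul_envApprox _ _
      _ ≤ 3 * (K * envApprox S ξ) := by gcongr; exact envApprox_image_le T S ξ
      _ ≤ 3 * K * env S ξ := by rw [← mul_assoc]; gcongr; exact envApprox_le_env S ξ

end Envelope

section DualAction

variable {n : Type*} [Fintype n]

theorem dualAct_dualAct (A B : Matrix n n ℝ) (ξ : EuclideanSpace ℝ n) :
    dualAct A (dualAct B ξ) = dualAct (B * A) ξ := by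
  rw [dualAct, dualAct, dualAct, transpose_mul, ← mulVec_mulVec]
  rfl

variable [DecidableEq n]

theorem dualAct_one (ξ : EuclideanSpace ℝ n) : dualAct (1 : Matrix n n ℝ) ξ = ξ := by
  simp [dualAct]

theorem dualAct_conj (g h : GL n ℝ) (ξ : EuclideanSpace ℝ n) :
    dualAct ↑(MulAut.conj g⁻¹ h) (dualAct g ξ) = dualAct g (dualAct h ξ) := by
  rw [dualAct_dualAct, dualAct_dualAct, MulAut.conj_apply, ← Units.val_mul, ← Units.val_mul]
  congr 2
  group

noncomputable def dualActEquiv (g : GL n ℝ) : EuclideanSpace ℝ n ≃L[ℝ] EuclideanSpace ℝ n :=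
  LinearEquiv.toContinuousLinearEquiv
    { toFun := dualAct g
      invFun := dualAct ↑g⁻¹
      map_add' := fun x y => by simp [dualAct, mulVec_add]
      map_smul' := fun c x => by simp [dualAct, mulVec_smul]
      left_inv := fun x => by
        rw [dualAct_dualAct, ← Units.val_mul, mul_inv_cancel, Units.val_one, dualAct_one]
      right_inv := fun x => by
        rw [dualAct_dualAct, ← Units.val_mul, inv_mul_cancel, Units.val_one, dualAct_one] }

@[simp]
theorem coe_dualActEquiv (g : GL n ℝ) : ⇑(dualActEquiv g) = dualAct g := rfl

theorem dualAct_image_dualOrbit (H : Subgroup (GL n ℝ)) (ξ₀ : EuclideanSpace ℝ n) (g : GL n ℝ) :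
    dualAct g '' {ξ | ∃ h : GL n ℝ, h ∈ H ∧ dualAct h ξ₀ = ξ} =
      {ξ | ∃ h : GL n ℝ, h ∈ H.map (MulAut.conj g⁻¹).toMonoidHom ∧
        dualAct h (dualAct g ξ₀) = ξ} := by
  ext ξ
  simp only [Set.mem_image, Set.mem_ofPred_eq, Subgroup.mem_map, MulEquiv.coe_toMonoidHom]
  constructor
  · rintro ⟨_, ⟨h, hH, rfl⟩, rfl⟩
    exact ⟨_, ⟨h, hH, rfl⟩, dualAct_conj g h ξ₀⟩
  · rintro ⟨_, ⟨h, hH, rfl⟩, rfl⟩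
    exact ⟨_, ⟨h, hH, rfl⟩, (dualAct_conj g h ξ₀).symm⟩

end DualAction

theorem stmt1 (d : ℕ) (H : Subgroup (GL (Fin d) ℝ))
    (ξ₀ : EuclideanSpace ℝ (Fin d))
    (O₁ : Set (EuclideanSpace ℝ (Fin d)))
    (hO₁ : O₁ = {ξ | ∃ h : GL (Fin d) ℝ, h ∈ H ∧ dualAct (↑h) ξ₀ = ξ})
    (hO₁open : IsOpen O₁)
    (g : GL (Fin d) ℝ) :
    dualAct (↑g) '' O₁ =
        {ξ | ∃ h : GL (Fin d) ℝ,
          h ∈ Subgroup.map (MulAut.conj g⁻¹).toMonoidHom H ∧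
          dualAct (↑h) (dualAct (↑g) ξ₀) = ξ} ∧
      IsOpen (dualAct (↑g) '' O₁) ∧
      ∃ c₁ c₂ : ℝ, 0 < c₁ ∧ c₁ ≤ c₂ ∧
        ∀ ξ ∈ O₁,
          c₁ * env O₁ᶜ ξ ≤ env (dualAct (↑g) '' O₁)ᶜ (dualAct (↑g) ξ) ∧
            env (dualAct (↑g) '' O₁)ᶜ (dualAct (↑g) ξ) ≤ c₂ * env O₁ᶜ ξ := by
  have hcompl : (dualAct (↑g) '' O₁)ᶜ = dualActEquiv g '' O₁ᶜ := by
    rw [Set.image_compl_eq (dualActEquiv g).bijective, coe_dualActEquiv]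
  obtain ⟨c₁, c₂, hc₁, hc₁₂, hc⟩ := env_image_comparable (dualActEquiv g) O₁ᶜ
  refine ⟨hO₁ ▸ dualAct_image_dualOrbit H ξ₀ g, ?_, c₁, c₂, hc₁, hc₁₂, fun ξ _ => ?_⟩
  · simpa using (dualActEquiv g).toHomeomorph.isOpenMap O₁ hO₁open
  · rw [hcompl]
    exact hc ξ
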